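/- arXiv:math/0301387 — 4 statements merged into one kernel-verified Lean document; each statement's English description precedes it below -/
import Mathlib

section
/- Let $p$ be an odd prime and let $A$ be an abelian group of exponent dividing $p$ on which the dihedral group $D_p = \langle \sigma, \tau \rangle$ acts, and suppose $c \in A$ satisfies $c^{\nu} = 1$ where $\nu = 1 + \sigma + \cdots + \sigma^{p-1}$. Write $c = c_1 c_2$ with $c_1^{\tau} = c_1$ and $c_2^{\sigma\tau} = c_2$, and assume additionally $c^{\sigma} = c$, $c^{\tau} = c^{-1}$, and $c_1^{\nu} = 1$. Then for all $t \ge 0$: $c_1^{\sigma^t} = c_1^{2t+1} c_2^{2t}$ and $c_2^{\sigma^t} = c_1^{-2t} c_2^{1-2t}$; consequently $c_1^{\nu} = c^{(p-1)p} c_1^{p} $, and hence $c_1^p = 1$. -/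
section auxForDihedral
variable {G : Type*} [CommGroup G]

private lemma form_mul (x y : G) (a b a' b' : ℤ) :
    (x ^ a * y ^ b) * (x ^ a' * y ^ b') = x ^ (a + a') * y ^ (b + b') := by
  rw [zpow_add, zpow_add, mul_mul_mul_comm]

private lemma form_pow (x y : G) (a b n : ℤ) :
    (x ^ a * y ^ b) ^ n = x ^ (a * n) * y ^ (b * n) := by
  rw [mul_zpow, zpow_mul, zpow_mul]

private lemma form_inv (x y : G) (a b : ℤ) :
    (x ^ a * y ^ b)⁻¹ = x ^ (-a) * y ^ (-b) := by
  rw [mul_inv, zpow_neg, zpow_neg]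

private lemma form_eq (x y : G) {a b a' b' : ℤ} (h1 : a = a') (h2 : b = b') :
    x ^ a * y ^ b = x ^ a' * y ^ b' := by rw [h1, h2]

private lemma smul_zpow_act {M A : Type*} [Group M] [Group A] [MulDistribMulAction M A]
    (g : M) (x : A) (n : ℤ) : g • x ^ n = (g • x) ^ n := by
  cases n with
  | ofNat k => simp [smul_pow']
  | negSucc k => simp [zpow_negSucc, smul_inv', smul_pow']

end auxForDihedral

/-- The key computation in the proof of Proposition 7 (`Prop. \ref{Pk}`): let the dihedral
group `D_p` (`p` an odd prime, `σ = r 1`, `τ = sr 0`) act on an abelian group `A` of exponent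
dividing `p`, and let `c = c₁c₂` with `c₁` fixed by `τ`, `c₂` fixed by `στ` (paper convention:
"apply `σ`, then `τ`", i.e. the left action of `τ * σ`), `c` fixed by `σ`, `c^τ = c⁻¹` and
`c₁^ν = 1` for `ν = 1 + σ + ⋯ + σ^{p-1}`.  Then for all `t ≥ 0`,
`c₁^{σ^t} = c₁^{2t+1} c₂^{2t}` and `c₂^{σ^t} = c₁^{-2t} c₂^{1-2t}`; consequently
`c₁^ν = c^{(p-1)p} c₁^p`, and hence `c₁^p = 1`. -/
theorem dihedral_component_computation (p : ℕ) (hp : p.Prime) (hodd : Odd p)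
    (A : Type*) [CommGroup A] [MulDistribMulAction (DihedralGroup p) A]
    (hexp : ∀ a : A, a ^ p = 1)
    (c c₁ c₂ : A)
    (hc : c = c₁ * c₂)
    (h₁ : (DihedralGroup.sr 0 : DihedralGroup p) • c₁ = c₁)
    (h₂ : ((DihedralGroup.sr 0 * DihedralGroup.r 1 : DihedralGroup p)) • c₂ = c₂)
    (hσc : (DihedralGroup.r 1 : DihedralGroup p) • c = c)
    (hτc : (DihedralGroup.sr 0 : DihedralGroup p) • c = c⁻¹)
    (hν : ∏ k ∈ Finset.range p, ((DihedralGroup.r 1 : DihedralGroup p) ^ k) • c₁ = 1) :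
    (∀ t : ℕ, ((DihedralGroup.r 1 : DihedralGroup p) ^ t) • c₁ = c₁ ^ (2 * t + 1) * c₂ ^ (2 * t)) ∧
    (∀ t : ℕ, ((DihedralGroup.r 1 : DihedralGroup p) ^ t) • c₂ =
      (c₁ ^ (2 * t))⁻¹ * (c₂ * (c₂ ^ (2 * t))⁻¹)) ∧
    (∏ k ∈ Finset.range p, ((DihedralGroup.r 1 : DihedralGroup p) ^ k) • c₁ =
      c ^ ((p - 1) * p) * c₁ ^ p) ∧
    c₁ ^ p = 1 := by
  set σ : DihedralGroup p := DihedralGroup.r 1 with hσ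
  set τ : DihedralGroup p := DihedralGroup.sr 0 with hτ
  have hc' : c = c₂ * c₁ := by rw [hc, mul_comm]
  -- τ • c₂
  have hτc₂ : τ • c₂ = c₁⁻¹ * c⁻¹ := by
    have h0 : c⁻¹ = c₁ * τ • c₂ := by rw [← hτc, hc, smul_mul', h₁]
    rw [h0]
    exact (inv_mul_cancel_left _ _).symm
  -- σ • c₂ = τ • c₂
  have hττ : τ * τ = 1 := by
    rw [hτ]
    show DihedralGroup.sr 0 * DihedralGroup.sr 0 = 1
    rw [DihedralGroup.sr_mul_sr, DihedralGroup.one_def]; ring_nf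
  have hσc₂ : σ • c₂ = c₁ ^ (-2 : ℤ) * c₂ ^ (-1 : ℤ) := by
    have h2 : τ • (σ • c₂) = c₂ := by rw [← mul_smul]; exact h₂
    have h3 : τ • (τ • (σ • c₂)) = τ • c₂ := by rw [h2]
    rw [← mul_smul, hττ, one_smul] at h3
    rw [h3, hτc₂, hc']
    group
  have hσc₁ : σ • c₁ = c₁ ^ (3 : ℤ) * c₂ ^ (2 : ℤ) := by
    have h4 : c = σ • c₁ * σ • c₂ := by rw [← hσc, hc, smul_mul']
    have h5 : σ • c₁ = c * (c₁ ^ (-2 : ℤ) * c₂ ^ (-1 : ℤ))⁻¹ := by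
      rw [h4, hσc₂, mul_inv_cancel_right]
    rw [h5, hc]
    have h6 : c₁ * c₂ = c₁ ^ (1 : ℤ) * c₂ ^ (1 : ℤ) := by group
    rw [h6, form_inv, form_mul]
    exact form_eq _ _ (by ring) (by ring)
  -- the main induction, with integer exponents
  have key : ∀ t : ℕ, (σ ^ t • c₁ = c₁ ^ (2 * (t : ℤ) + 1) * c₂ ^ (2 * (t : ℤ))) ∧
      (σ ^ t • c₂ = c₁ ^ (-(2 * (t : ℤ))) * c₂ ^ (1 - 2 * (t : ℤ))) := by
    intro t
    induction t with
    | zero => constructor <;> simp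
    | succ n ih =>
      obtain ⟨ih1, ih2⟩ := ih
      have hs : (σ ^ (n + 1) : DihedralGroup p) = σ ^ n * σ := pow_succ σ n
      constructor
      · rw [hs, mul_smul, hσc₁, smul_mul', smul_zpow_act, smul_zpow_act, ih1, ih2,
          form_pow, form_pow, form_mul]
        exact form_eq _ _ (by push_cast; ring) (by push_cast; ring)
      · rw [hs, mul_smul, hσc₂, smul_mul', smul_zpow_act, smul_zpow_act, ih1, ih2,
          form_pow, form_pow, form_mul]
        exact form_eq _ _ (by push_cast; ring) (by push_cast; ring)
  have key1 : ∀ t : ℕ, (σ ^ t) • c₁ = c₁ ^ (2 * t + 1) * c₂ ^ (2 * t) := by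
    intro t
    rw [(key t).1,
      show (2 * (t : ℤ) + 1) = ((2 * t + 1 : ℕ) : ℤ) by push_cast; ring,
      show (2 * (t : ℤ)) = ((2 * t : ℕ) : ℤ) by push_cast; ring, zpow_natCast, zpow_natCast]
  have key2 : ∀ t : ℕ, (σ ^ t) • c₂ = (c₁ ^ (2 * t))⁻¹ * (c₂ * (c₂ ^ (2 * t))⁻¹) := by
    intro t
    rw [(key t).2, zpow_neg, zpow_sub, zpow_one]
    norm_cast
  have h3 : ∏ k ∈ Finset.range p, (σ ^ k) • c₁ = c ^ ((p - 1) * p) * c₁ ^ p := by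
    have hprod : ∏ k ∈ Finset.range p, (σ ^ k) • c₁
        = c₁ ^ (∑ k ∈ Finset.range p, (2 * k + 1)) * c₂ ^ (∑ k ∈ Finset.range p, 2 * k) := by
      rw [← Finset.prod_pow_eq_pow_sum, ← Finset.prod_pow_eq_pow_sum, ← Finset.prod_mul_distrib]
      exact Finset.prod_congr rfl fun k _ => key1 k
    have hgauss := Finset.sum_range_id_mul_two p
    have hcomm : (p - 1) * p = p * (p - 1) := Nat.mul_comm _ _
    have hsum2 : ∑ k ∈ Finset.range p, 2 * k = (p - 1) * p := by
      rw [← Finset.mul_sum]; omega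
    have hsum1 : ∑ k ∈ Finset.range p, (2 * k + 1) = p * p := by
      rw [Finset.sum_add_distrib, hsum2, Finset.sum_const, Finset.card_range, smul_eq_mul,
        mul_one]
      cases p with
      | zero => simp
      | succ m => simp [Nat.succ_sub_one]; ring
    have hpp : p * p = (p - 1) * p + p := by
      cases p with
      | zero => rfl
      | succ m => simp [Nat.succ_sub_one]; ring
    rw [hprod, hsum1, hsum2, hc, mul_pow, hpp, pow_add]
    exact mul_right_comm _ _ _
  refine ⟨key1, key2, h3, ?_⟩
  rw [hν] at h3
  have hcp : c ^ ((p - 1) * p) = 1 := by rw [mul_comm, pow_mul, hexp, one_pow]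
  rw [hcp, one_mul] at h3
  exact h3.symm
end

section
/- Let $L/k$ be a cyclic extension of number fields of prime degree $p$ with Galois group generated by $\sigma$. Let $\operatorname{Am}$ denote the group of ambiguous ideal classes in the $p$-class group of $L$ (classes fixed by $\sigma$) and $\operatorname{Am}_{\mathrm{st}}$ the subgroup of strongly ambiguous classes (classes containing a $\sigma$-invariant ideal). Then there is an exact sequence $1 \to \operatorname{Am}_{\mathrm{st}} \to \operatorname{Am} \xrightarrow{\theta} (E_k \cap N_{L/k} L^{\times})/N_{L/k} E_L \to 1$, where $\theta([\mathfrak{a}]) = N_{L/k}(\alpha) \cdot N_{L/k}E_L$ whenever $\mathfrak{a}^{\sigma - 1} = (\alpha)$. In particular, $\operatorname{Am}/\operatorname{Am}_{\mathrm{st}}$ is an elementary abelian $p$-group. -/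
/-!
Write `σ 𝔞 = α 𝔞`. Taking relative norms gives `(N α) = (1)` in `𝓞 k`. If `N α = N η` for a unit
`η` of `𝓞 L`, Hilbert 90 writes `α / η = β / σ β`, and `m β 𝔞` is `σ`-invariant for any integer
`m ≠ 0` making `m β` integral; conversely, applying `σ` to `x 𝔞 = y 𝔟` with `𝔟` invariant shows
that `N α` is the norm of a unit. For surjectivity write `ε = N (a / b)`: the orbit products
`∏ σ^j a` and `∏ σ^j b` generate the same ideal, so the exponent function of `(a) / (b)` on the
primes has vanishing sums over `σ`-orbits and is therefore `e ∘ σ⁻¹ - e` for a nonnegative finitely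
supported `e`; the ideal with exponents `e` satisfies `σ 𝔞 = (a / b) 𝔞`. Raising `𝔞` to a power
`t ≡ 1 mod p` moves its class into the `p`-part and changes `N α` only by a power of
`ε^p = N ε ∈ N E_L`. Finally, `N (α^p) = (N α)^p` is the norm of the unit `N α ∈ 𝓞 k`, so `c^p`
is strongly ambiguous.
-/

open NumberField nonZeroDivisors Finset IsDedekindDomain FractionalIdeal
open scoped Pointwise

section OrbitSums

variable {H V : Type*} [Group H] [MulAction H V] {t : H} {n : ℕ}

theorem sum_range_pow_smul_smul (ht : t ^ n = 1) (φ : V → ℤ) (v : V) :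
    ∑ j ∈ range n, φ (t ^ j • t • v) = ∑ j ∈ range n, φ (t ^ j • v) := by
  simp only [smul_smul, ← pow_succ]
  cases n with
  | zero => rfl
  | succ m => rw [sum_range_succ, ht, one_smul, sum_range_succ', pow_zero, one_smul]

/-- With `S v = ∑ j * f (t ^ j • v)` one has `S (t • v) = S v + n * f v`, so `S / n` works up to
a `t`-invariant shift, which is chosen to make it nonnegative. -/
theorem exists_nonneg_apply_smul_eq_add (hn : 0 < n) (ht : t ^ n = 1) {f : V → ℤ}
    (hf : (Function.support f).Finite) (hsum : ∀ v, ∑ j ∈ range n, f (t ^ j • v) = 0) :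
    ∃ e : V → ℤ, 0 ≤ e ∧ (Function.support e).Finite ∧ ∀ v, e (t • v) = e v + f v := by
  set S : V → ℤ := fun v => ∑ j ∈ range n, (j : ℤ) * f (t ^ j • v)
  set A : V → ℤ := fun v => ∑ j ∈ range n, |f (t ^ j • v)|
  have hS : ∀ v, S (t • v) = S v + n * f v := fun v => by
    have h₁ := sum_range_succ' (fun j => (j : ℤ) * f (t ^ j • v)) n
    have h₂ := sum_range_succ (fun j => (j : ℤ) * f (t ^ j • v)) n
    have h₃ := hsum (t • v)
    simp only [pow_succ, mul_smul, Nat.cast_succ, add_mul, one_mul, sum_add_distrib, ht,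
      one_smul, Nat.cast_zero, zero_mul, add_zero] at h₁ h₂ h₃
    simp only [S]
    linarith
  have hSA : ∀ v, -(A v * n) ≤ S v := fun v => by
    refine neg_le_of_abs_le ((abs_sum_le_sum_abs _ _).trans ?_)
    rw [sum_mul]
    refine sum_le_sum fun j hj => ?_
    rw [abs_mul, Nat.abs_cast, mul_comm]
    gcongr
    exact (mem_range.mp hj).le
  refine ⟨fun v => S v / n + A v, fun v => ?_, ?_, fun v => ?_⟩
  · have : -A v ≤ S v / n :=
      (Int.le_ediv_iff_mul_le (by exact_mod_cast hn)).mpr (by linarith [hSA v])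
    simp only [Pi.zero_apply]
    linarith
  · refine ((finite_toSet (range n)).biUnion fun j _ =>
      hf.preimage (MulAction.injective (t ^ j)).injOn).subset fun v hv => ?_
    by_contra hcon
    simp only [Set.mem_iUnion, Set.mem_preimage, Function.mem_support, mem_coe, not_exists,
      not_not] at hcon
    apply hv
    simp only [S, A]
    rw [sum_eq_zero fun j hj => by rw [hcon j hj, mul_zero],
      sum_eq_zero fun j hj => by rw [hcon j hj, abs_zero], Int.zero_ediv, add_zero]
  · have hA : A (t • v) = A v := sum_range_pow_smul_smul ht (fun w => |f w|) v
    simp only [hS, hA, Int.add_mul_ediv_left _ _ (Int.natCast_ne_zero.mpr hn.ne')]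
    ring

end OrbitSums

theorem exists_mod_eq_one_pow_pow_prime_pow_eq_one {G : Type*} [Monoid G] {p : ℕ} (hp : p.Prime)
    {c : G} (hc : IsOfFinOrder c) : ∃ t n : ℕ, t % p = 1 ∧ (c ^ t) ^ p ^ n = 1 := by
  have hc₀ : orderOf c ≠ 0 := hc.orderOf_pos.ne'
  obtain ⟨x, -, hx⟩ :=
    Nat.exists_mul_mod_eq_one_of_coprime (Nat.coprime_ordCompl hp hc₀).symm hp.one_lt
  refine ⟨ordCompl[p] (orderOf c) * x, (orderOf c).factorization p, hx, ?_⟩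
  rw [← pow_mul, orderOf_dvd_iff_pow_eq_one.symm]
  calc orderOf c = ordProj[p] (orderOf c) * ordCompl[p] (orderOf c) :=
        (Nat.ordProj_mul_ordCompl_eq_self _ p).symm
    _ ∣ ordCompl[p] (orderOf c) * x * p ^ (orderOf c).factorization p :=
        ⟨x, by ring⟩

namespace IsDedekindDomain.HeightOneSpectrum

variable {R G : Type*} [CommRing R] [Group G] [MulSemiringAction G R]

instance : MulAction G (HeightOneSpectrum R) where
  smul g v := ⟨g • v.asIdeal, by rw [Ideal.pointwise_smul_eq_comap]; exact Ideal.comap_isPrime _ _,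
    (smul_ne_zero_iff_ne g).mpr v.ne_bot⟩
  one_smul v := HeightOneSpectrum.ext (one_smul G v.asIdeal)
  mul_smul g h v := HeightOneSpectrum.ext (mul_smul g h v.asIdeal)

@[simp]
theorem smul_asIdeal (g : G) (v : HeightOneSpectrum R) : (g • v).asIdeal = g • v.asIdeal := rfl

end IsDedekindDomain.HeightOneSpectrum

theorem FractionalIdeal.coeIdeal_eq_spanSingleton_div_mul_iff {R K : Type*} [CommRing R]
    [IsDedekindDomain R] [Field K] [Algebra R K] [IsFractionRing R K] {I J : Ideal R} {a b : R}
    (hb : b ≠ 0) :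
    (J : FractionalIdeal R⁰ K) = spanSingleton R⁰ (algebraMap R K a / algebraMap R K b) * I ↔
      Ideal.span {b} * J = Ideal.span {a} * I := by
  have hbK : algebraMap R K b ≠ 0 := (map_ne_zero_iff _ (IsFractionRing.injective R K)).mpr hb
  rw [← coeIdeal_inj (K := K), coeIdeal_mul, coeIdeal_mul, coeIdeal_span_singleton,
    coeIdeal_span_singleton, ← mul_right_inj' (spanSingleton_ne_zero_iff.mpr hbK), ← mul_assoc,
    spanSingleton_mul_spanSingleton, mul_div_cancel₀ _ hbK]

section Counts

variable {R : Type*} [CommRing R] [IsDedekindDomain R] (K : Type*) [Field K] [Algebra R K]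
  [IsFractionRing R K]

theorem FractionalIdeal.count_coeIdeal_eq_multiplicity (v : HeightOneSpectrum R) {J : Ideal R}
    (hJ : J ≠ 0) : count K v J = multiplicity v.asIdeal J := by
  classical
  rw [count_coe K v hJ, ← HeightOneSpectrum.count_normalizedFactors_eq_multiplicity hJ,
    Associates.factors_mk _ hJ, Associates.count_some (Associates.irreducible_mk.mpr v.irreducible),
    ← Multiset.count_map_eq_count' _ _ Subtype.val_injective, Associates.map_subtype_coe_factors',
    UniqueFactorizationMonoid.factors_eq_normalizedFactors,
    ← Multiset.count_map_eq_count' _ _ (Associates.mk_injective (M := Ideal R))]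

theorem FractionalIdeal.exists_ideal_count_eq {e : HeightOneSpectrum R → ℤ} (he : 0 ≤ e)
    (hfin : (Function.support e).Finite) : ∃ I : Ideal R, I ≠ 0 ∧ ∀ v, count K v I = e v := by
  refine ⟨∏ᶠ v, v.asIdeal ^ (e v).toNat,
    finprod_induction (· ≠ 0) one_ne_zero (fun _ _ => mul_ne_zero) fun v => pow_ne_zero _ v.ne_bot,
    fun v => ?_⟩
  have hpow : ∀ w : HeightOneSpectrum R,
      ((w.asIdeal ^ (e w).toNat : Ideal R) : FractionalIdeal R⁰ K) =
        (w.asIdeal : FractionalIdeal R⁰ K) ^ e w := fun w => by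
    rw [coeIdeal_pow, ← zpow_natCast, Int.toNat_of_nonneg (he w)]
  rw [coeIdeal_finprod R⁰ K le_rfl, finprod_congr hpow, count_finprod K v e]
  exact Filter.eventually_cofinite.mpr hfin

theorem FractionalIdeal.eq_of_count_coeIdeal_eq {I J : Ideal R} (hI : I ≠ 0) (hJ : J ≠ 0)
    (h : ∀ v, count K v (I : FractionalIdeal R⁰ K) = count K v J) : I = J := by
  rw [← coeIdeal_inj (K := K),
    ← finprod_heightOneSpectrum_factorization' K (coeIdeal_ne_zero.mpr hI),
    ← finprod_heightOneSpectrum_factorization' K (coeIdeal_ne_zero.mpr hJ)]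
  simp only [h]

variable {G : Type*} [Group G] [MulSemiringAction G R]

theorem FractionalIdeal.count_smul (g : G) (v : HeightOneSpectrum R) {J : Ideal R} (hJ : J ≠ 0) :
    count K v ↑(g • J) = count K (g⁻¹ • v) J := by
  rw [count_coeIdeal_eq_multiplicity K v ((smul_ne_zero_iff_ne g).mpr hJ),
    count_coeIdeal_eq_multiplicity K _ hJ,
    ← multiplicity_map_eq (MulDistribMulAction.toMulEquiv (Ideal R) g) (a := (g⁻¹ • v).asIdeal)]
  simp

theorem FractionalIdeal.count_span_prod_smul (g : G) (n : ℕ) {a : R} (ha : a ≠ 0)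
    (v : HeightOneSpectrum R) :
    count K v (Ideal.span {∏ j ∈ range n, g ^ j • a}) =
      ∑ j ∈ range n, count K (g⁻¹ ^ j • v) (Ideal.span {a}) := by
  have hspan : Ideal.span {a} ≠ 0 := by simpa using ha
  simp only [← Ideal.prod_span_singleton, ← Set.smul_set_singleton, ← Ideal.smul_closure,
    ← coeIdealHom_apply, map_prod]
  rw [count_prod K v]
  · simp only [coeIdealHom_apply, count_smul K _ v hspan, inv_pow]
  · exact fun j _ => coeIdeal_ne_zero.mpr ((smul_ne_zero_iff_ne _).mpr hspan)

end Counts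

theorem Ideal.exists_span_mul_smul_eq {R G : Type*} [CommRing R] [IsDedekindDomain R] [Group G]
    [MulSemiringAction G R] {g : G} {n : ℕ} (hn : 0 < n) (hg : g ^ n = 1) {a b : R}
    (ha : a ≠ 0) (hb : b ≠ 0)
    (hab : Ideal.span {∏ j ∈ range n, g ^ j • a} = Ideal.span {∏ j ∈ range n, g ^ j • b}) :
    ∃ I : Ideal R, I ≠ 0 ∧ Ideal.span {b} * g • I = Ideal.span {a} * I := by
  let K := FractionRing R
  let f v := count K v (Ideal.span {a} : FractionalIdeal R⁰ K) -
    count K v (Ideal.span {b} : FractionalIdeal R⁰ K)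
  have hf : (Function.support f).Finite :=
    (Filter.eventually_cofinite.mp
      ((FractionalIdeal.finite_factors (Ideal.span {a} : FractionalIdeal R⁰ K)).and
        (FractionalIdeal.finite_factors (Ideal.span {b} : FractionalIdeal R⁰ K)))).subset
      fun v hv hc => hv (by simp only [f, hc.1, hc.2, sub_self])
  have horbit : ∀ v, ∑ j ∈ range n, f (g⁻¹ ^ j • v) = 0 := fun v => by
    simp only [f, sum_sub_distrib, ← count_span_prod_smul K g n ha,
      ← count_span_prod_smul K g n hb, hab, sub_self]
  obtain ⟨e, he, hefin, hee⟩ :=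
    exists_nonneg_apply_smul_eq_add hn (by rw [inv_pow, hg, inv_one]) hf horbit
  obtain ⟨I, hI, hIe⟩ := exists_ideal_count_eq K he hefin
  have hspan : ∀ {x : R}, x ≠ 0 → Ideal.span {x} ≠ 0 := Ideal.span_singleton_eq_bot.not.mpr
  have hgI : g • I ≠ 0 := (smul_ne_zero_iff_ne g).mpr hI
  refine ⟨I, hI, eq_of_count_coeIdeal_eq K (mul_ne_zero (hspan hb) hgI)
    (mul_ne_zero (hspan ha) hI) fun v => ?_⟩
  rw [coeIdeal_mul, coeIdeal_mul, count_mul K v (coeIdeal_ne_zero.mpr (hspan hb))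
    (coeIdeal_ne_zero.mpr hgI), count_mul K v (coeIdeal_ne_zero.mpr (hspan ha))
    (coeIdeal_ne_zero.mpr hI), count_smul K g v hI, hIe, hIe, hee]
  ring

section CyclicGalois

variable {K L : Type*} [Field K] [Field L] [Algebra K L] [FiniteDimensional K L] [IsGalois K L]
  {g : L ≃ₐ[K] L}

theorem algebraMap_norm_eq_prod_range_pow (hg : ∀ h, h ∈ Subgroup.zpowers g) (x : L) :
    algebraMap K L (Algebra.norm K x) = ∏ j ∈ range (orderOf g), (g ^ j) x := by
  classical
  rw [Algebra.norm_eq_prod_automorphisms, ← IsCyclic.image_range_orderOf hg,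
    prod_image fun i hi j hj h => pow_injOn_Iio_orderOf (by simpa using hi) (by simpa using hj) h]

/-- Mathlib's `groupCohomology.exists_div_of_norm_eq_one` needs `K L : Type`; here it is derived
from Noether's version through the cocycle `g ^ m ↦ x · g x ⋯ g ^ (m - 1) x`. -/
theorem exists_eq_div_apply_of_norm_eq_one (hg : ∀ h, h ∈ Subgroup.zpowers g) {x : Lˣ}
    (hx : Algebra.norm K (x : L) = 1) : ∃ y : Lˣ, (x : L) = y / g y := by
  let F : ℕ → Lˣ := fun m => ∏ j ∈ range m, (g ^ j) • x
  have hF_add : ∀ m m', F (m + m') = F m * (g ^ m) • F m' := fun m m' => by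
    simp only [F, prod_range_add, smul_prod', ← mul_smul, ← pow_add]
  have hF_per : Function.Periodic F (orderOf g) := fun m => by
    have : F (orderOf g) = 1 := Units.ext <| by
      rw [Units.coe_prod, Units.val_one, ← map_one (algebraMap K L), ← hx,
        algebraMap_norm_eq_prod_range_pow hg]
      rfl
    rw [hF_add, this, smul_one, mul_one]
  have hF : Function.FactorsThrough F (g ^ ·) := fun m m' h => by
    rw [← hF_per.map_mod_nat m, ← hF_per.map_mod_nat m', pow_eq_pow_iff_modEq.mp h]
  have hcocycle : groupCohomology.IsMulCocycle₁ (Function.extend (g ^ ·) F 1) := fun a b => by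
    obtain ⟨m, rfl⟩ := mem_powers_iff_mem_zpowers.mpr (hg a)
    obtain ⟨m', rfl⟩ := mem_powers_iff_mem_zpowers.mpr (hg b)
    rw [← pow_add, hF.extend_apply, hF.extend_apply, hF.extend_apply, hF_add, mul_comm]
  obtain ⟨β, hβ⟩ :=
    groupCohomology.isMulCoboundary₁_of_isMulCocycle₁_of_aut_to_units _ hcocycle
  have hβg : g • β / β = x := by
    have h₁ := hF.extend_apply (e' := 1) 1
    simp only [pow_one] at h₁
    rw [hβ, h₁]
    simp only [F, prod_range_one, pow_zero, one_smul]
  refine ⟨β⁻¹, ?_⟩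
  rw [← hβg, Units.val_div_eq_div_val, Units.val_inv_eq_inv_val, map_inv₀, inv_div_inv]
  rfl

end CyclicGalois

section GaloisActionOnIdeals

variable {k L : Type*} [Field k] [Field L] [Algebra k L]

theorem smul_eq_map_galRestrict [NumberField k] [IsGalois k L] (σ : L ≃ₐ[k] L) (I : Ideal (𝓞 L)) :
    σ • I = I.map (galRestrict (𝓞 k) k L (𝓞 L) σ) := by
  rw [Ideal.pointwise_smul_def]
  congr 1
  ext x
  exact (algebraMap_galRestrict_apply (𝓞 k) σ x).symm

variable [NumberField L]

theorem coeIdeal_smul_span_singleton (σ : L ≃ₐ[k] L) (x : 𝓞 L) :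
    ((σ • Ideal.span {x} : Ideal (𝓞 L)) : FractionalIdeal (𝓞 L)⁰ L) =
      spanSingleton (𝓞 L)⁰ (σ (x : L)) := by
  rw [Ideal.smul_closure, Set.smul_set_singleton, coeIdeal_span_singleton]
  rfl

theorem coeIdeal_smul_pow_eq {σ : L ≃ₐ[k] L} {I : Ideal (𝓞 L)} {α : Lˣ}
    (h : ((σ • I : Ideal (𝓞 L)) : FractionalIdeal (𝓞 L)⁰ L) = spanSingleton (𝓞 L)⁰ (α : L) * I)
    (n : ℕ) : ((σ • I ^ n : Ideal (𝓞 L)) : FractionalIdeal (𝓞 L)⁰ L) =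
      spanSingleton (𝓞 L)⁰ ((α ^ n : Lˣ) : L) * (I ^ n : Ideal (𝓞 L)) := by
  rw [smul_pow', coeIdeal_pow, coeIdeal_pow, h, mul_pow, spanSingleton_pow,
    Units.val_pow_eq_pow_val]

variable [NumberField k] [IsGalois k L]

theorem prod_range_orderOf_smul_eq_algebraMap_intNorm {σ : L ≃ₐ[k] L}
    (hσ : ∀ g, g ∈ Subgroup.zpowers σ) (x : 𝓞 L) :
    ∏ j ∈ range (orderOf σ), σ ^ j • x =
      algebraMap (𝓞 k) (𝓞 L) (Algebra.intNorm (𝓞 k) (𝓞 L) x) := by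
  apply RingOfIntegers.coe_injective
  rw [map_prod, ← IsScalarTower.algebraMap_apply, IsScalarTower.algebraMap_apply (𝓞 k) k L,
    Algebra.algebraMap_intNorm (L := L), algebraMap_norm_eq_prod_range_pow hσ]
  rfl

theorem exists_units_algebraMap_eq_norm_of_smul_eq {σ : L ≃ₐ[k] L} {I : Ideal (𝓞 L)}
    (hI : I ≠ 0) {α : Lˣ} (hα : ((σ • I : Ideal (𝓞 L)) : FractionalIdeal (𝓞 L)⁰ L) =
      spanSingleton (𝓞 L)⁰ (α : L) * I) :
    ∃ u : (𝓞 k)ˣ, algebraMap (𝓞 k) k u = Algebra.norm k (α : L) := by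
  obtain ⟨a, b, hb, hab⟩ := IsFractionRing.div_surjective (A := 𝓞 L) (α : L)
  have hb0 : b ≠ 0 := nonZeroDivisors.ne_zero hb
  rw [← hab, coeIdeal_eq_spanSingleton_div_mul_iff hb0] at hα
  have hN := congrArg (Ideal.relNorm (𝓞 k)) hα
  rw [map_mul, map_mul, smul_eq_map_galRestrict, Ideal.relNorm_map_algEquiv,
    Ideal.relNorm_singleton, Ideal.relNorm_singleton] at hN
  obtain ⟨u, hu⟩ := Ideal.span_singleton_eq_span_singleton.mp <|
    mul_right_cancel₀ ((Ideal.relNorm_eq_bot_iff (R := 𝓞 k)).not.mpr hI) hN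
  have hαb : (α : L) * algebraMap (𝓞 L) L b = algebraMap (𝓞 L) L a := by
    rw [← hab, div_mul_cancel₀ _ (by simpa using hb0)]
  have hNb : Algebra.norm k (algebraMap (𝓞 L) L b) ≠ 0 :=
    Algebra.norm_ne_zero_iff.mpr (by simpa using hb0)
  refine ⟨u, mul_left_cancel₀ hNb ?_⟩
  have hNu := congrArg (algebraMap (𝓞 k) k) hu
  rwa [map_mul, Algebra.algebraMap_intNorm (L := L), Algebra.algebraMap_intNorm (L := L), ← hαb,
    map_mul, mul_comm (Algebra.norm k (α : L))] at hNu

theorem exists_smul_span_mul_eq_self_of_norm_eq {σ : L ≃ₐ[k] L}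
    (hσ : ∀ g, g ∈ Subgroup.zpowers σ) {I : Ideal (𝓞 L)} {α : Lˣ}
    (hα : ((σ • I : Ideal (𝓞 L)) : FractionalIdeal (𝓞 L)⁰ L) =
      spanSingleton (𝓞 L)⁰ (α : L) * I) {w : (𝓞 L)ˣ}
    (hw : Algebra.norm k ((w : 𝓞 L) : L) = Algebra.norm k (α : L)) :
    ∃ c : 𝓞 L, c ≠ 0 ∧ σ • (Ideal.span {c} * I) = Ideal.span {c} * I := by
  have hwL : ((w : 𝓞 L) : L) ≠ 0 := by simp
  obtain ⟨y, hy⟩ := exists_eq_div_apply_of_norm_eq_one hσ (x := α / Units.mk0 _ hwL) <| by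
    rw [Units.val_div_eq_div_val, Units.val_mk0, div_eq_mul_inv, map_mul, ← hw, ← map_mul,
      mul_inv_cancel₀ hwL, map_one]
  have hαy : (α : L) * σ y = ((w : 𝓞 L) : L) * y := by
    rw [Units.val_div_eq_div_val, Units.val_mk0, div_eq_div_iff hwL (by simp)] at hy
    linear_combination hy
  obtain ⟨m, hm, hint⟩ := (IsFractionRing.isAlgebraic_iff ℤ ℚ L |>.mpr
    (.of_finite ℚ (y : L))).exists_integral_multiple
  obtain ⟨c, hc⟩ : ∃ c : 𝓞 L, (c : L) = m • (y : L) :=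
    ⟨⟨_, (mem_integralClosure_iff ℤ L).mpr hint⟩, rfl⟩
  refine ⟨c, fun h => ?_, ?_⟩
  · simp [h, eq_comm (a := (0 : L)), hm] at hc
  · rw [← coeIdeal_inj (K := L), smul_mul', coeIdeal_mul, coeIdeal_mul,
      coeIdeal_smul_span_singleton, hα, coeIdeal_span_singleton, ← mul_assoc,
      spanSingleton_mul_spanSingleton]
    congr 1
    refine (spanSingleton_eq_spanSingleton.mpr ⟨w, ?_⟩).symm
    show ((w : 𝓞 L) : L) * (c : L) = σ (c : L) * α
    rw [hc, map_zsmul, zsmul_eq_mul, zsmul_eq_mul]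
    linear_combination -(m : L) * hαy

theorem exists_units_norm_eq_of_mk0_eq {σ : L ≃ₐ[k] L} {I J : (Ideal (𝓞 L))⁰}
    (hIJ : ClassGroup.mk0 I = ClassGroup.mk0 J) (hJ : σ • (J : Ideal (𝓞 L)) = J) {α : Lˣ}
    (hα : ((σ • (I : Ideal (𝓞 L)) : Ideal (𝓞 L)) : FractionalIdeal (𝓞 L)⁰ L) =
      spanSingleton (𝓞 L)⁰ (α : L) * (I : Ideal (𝓞 L))) :
    ∃ w : (𝓞 L)ˣ, Algebra.norm k ((w : 𝓞 L) : L) = Algebra.norm k (α : L) := by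
  obtain ⟨x, y, hx, hy, hxy⟩ := ClassGroup.mk0_eq_mk0_iff.mp hIJ
  have h₁ : spanSingleton (𝓞 L)⁰ (x : L) * (I : Ideal (𝓞 L)) =
      spanSingleton (𝓞 L)⁰ (y : L) * (J : Ideal (𝓞 L)) := by
    simpa only [coeIdeal_mul, coeIdeal_span_singleton] using congrArg
      (fun I : Ideal (𝓞 L) => (I : FractionalIdeal (𝓞 L)⁰ L)) hxy
  have h₂ : spanSingleton (𝓞 L)⁰ (σ x) * (spanSingleton (𝓞 L)⁰ (α : L) * (I : Ideal (𝓞 L))) =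
      spanSingleton (𝓞 L)⁰ (σ y) * (J : Ideal (𝓞 L)) := by
    have := congrArg (fun I : Ideal (𝓞 L) => ((σ • I : Ideal (𝓞 L)) : FractionalIdeal (𝓞 L)⁰ L)) hxy
    simpa only [smul_mul', coeIdeal_mul, coeIdeal_smul_span_singleton, hα, hJ] using this
  have hI : ((I : Ideal (𝓞 L)) : FractionalIdeal (𝓞 L)⁰ L) ≠ 0 :=
    coeIdeal_ne_zero.mpr (nonZeroDivisors.ne_zero I.2)
  obtain ⟨z, hz⟩ := spanSingleton_eq_spanSingleton.mp <| mul_right_cancel₀ hI <| calc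
    spanSingleton (𝓞 L)⁰ (σ y * x) * (I : Ideal (𝓞 L))
      = spanSingleton (𝓞 L)⁰ (σ y) * (spanSingleton (𝓞 L)⁰ (y : L) * (J : Ideal (𝓞 L))) := by
        rw [← h₁, ← mul_assoc, spanSingleton_mul_spanSingleton]
    _ = spanSingleton (𝓞 L)⁰ (y : L) *
          (spanSingleton (𝓞 L)⁰ (σ x) * (spanSingleton (𝓞 L)⁰ (α : L) * (I : Ideal (𝓞 L)))) := by
        rw [h₂, mul_left_comm]
    _ = spanSingleton (𝓞 L)⁰ (σ x * α * y) * (I : Ideal (𝓞 L)) := by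
        simp only [← spanSingleton_mul_spanSingleton]
        ring
  have hN := congrArg (Algebra.norm k) hz
  simp only [Units.smul_def, Algebra.smul_def, map_mul, Algebra.norm_eq_of_algEquiv] at hN
  have hxy₀ : Algebra.norm k (x : L) * Algebra.norm k (y : L) ≠ 0 :=
    mul_ne_zero (Algebra.norm_ne_zero_iff.mpr (by simpa using hx))
      (Algebra.norm_ne_zero_iff.mpr (by simpa using hy))
  exact ⟨z, mul_right_cancel₀ hxy₀ (by linear_combination hN)⟩

theorem exists_smul_eq_of_algebraMap_eq_norm {σ : L ≃ₐ[k] L} (hσ : ∀ g, g ∈ Subgroup.zpowers σ)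
    {α : Lˣ} {u : (𝓞 k)ˣ} (hu : algebraMap (𝓞 k) k u = Algebra.norm k (α : L)) :
    ∃ I : Ideal (𝓞 L), I ≠ 0 ∧ ((σ • I : Ideal (𝓞 L)) : FractionalIdeal (𝓞 L)⁰ L) =
      spanSingleton (𝓞 L)⁰ (α : L) * I := by
  obtain ⟨a, b, hb, hab⟩ := IsFractionRing.div_surjective (A := 𝓞 L) (α : L)
  have hb0 : b ≠ 0 := nonZeroDivisors.ne_zero hb
  have hαb : (α : L) * algebraMap (𝓞 L) L b = algebraMap (𝓞 L) L a := by
    rw [← hab, div_mul_cancel₀ _ (by simpa using hb0)]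
  have ha0 : a ≠ 0 := by
    rintro rfl
    simp [hb0] at hαb
  have hN : Algebra.intNorm (𝓞 k) (𝓞 L) a = u * Algebra.intNorm (𝓞 k) (𝓞 L) b := by
    apply IsFractionRing.injective (𝓞 k) k
    rw [map_mul, hu, Algebra.algebraMap_intNorm (L := L), Algebra.algebraMap_intNorm (L := L),
      ← map_mul, hαb]
  have hspan : Ideal.span {∏ j ∈ range (orderOf σ), σ ^ j • a} =
      Ideal.span {∏ j ∈ range (orderOf σ), σ ^ j • b} := by
    rw [prod_range_orderOf_smul_eq_algebraMap_intNorm hσ,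
      prod_range_orderOf_smul_eq_algebraMap_intNorm hσ, hN, map_mul,
      Ideal.span_singleton_mul_left_unit (u.isUnit.map _)]
  obtain ⟨I, hI, h⟩ :=
    Ideal.exists_span_mul_smul_eq (orderOf_pos σ) (pow_orderOf_eq_one σ) ha0 hb0 hspan
  exact ⟨I, hI, by rwa [← hab, coeIdeal_eq_spanSingleton_div_mul_iff hb0]⟩

end GaloisActionOnIdeals

section AmbiguousClasses

variable {k L : Type*} [Field k] [Field L] [Algebra k L]

variable (k L) in
noncomputable abbrev unitsNorm : Lˣ →* kˣ := Units.map (Algebra.norm k : L →* k)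

variable (k L) in
noncomputable def normsOfUnits : Subgroup kˣ :=
  ((unitsNorm k L).comp (Units.map (algebraMap (𝓞 L) L).toMonoidHom)).range

theorem mem_normsOfUnits_iff {x : kˣ} :
    x ∈ normsOfUnits k L ↔ ∃ w : (𝓞 L)ˣ, Algebra.norm k ((w : 𝓞 L) : L) = x :=
  ⟨fun ⟨w, hw⟩ => ⟨w, congrArg Units.val hw⟩, fun ⟨w, hw⟩ => ⟨w, Units.ext hw⟩⟩

theorem units_pow_finrank_mem_normsOfUnits (u : (𝓞 k)ˣ) :
    Units.map (algebraMap (𝓞 k) k).toMonoidHom u ^ Module.finrank k L ∈ normsOfUnits k L := by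
  refine mem_normsOfUnits_iff.mpr ⟨Units.map (algebraMap (𝓞 k) (𝓞 L)).toMonoidHom u, ?_⟩
  rw [Units.val_pow_eq_pow_val, ← Algebra.norm_algebraMap]
  simp only [Units.coe_map, RingHom.toMonoidHom_eq_coe, MonoidHom.coe_coe]
  exact congrArg _ ((IsScalarTower.algebraMap_apply (𝓞 k) (𝓞 L) L _).symm.trans
    (IsScalarTower.algebraMap_apply (𝓞 k) k L _))

variable [NumberField L] (p : ℕ) (σ : L ≃ₐ[k] L)

/-- The class of `σ • I` is recorded through `J`, since `ClassGroup.mk0` takes ideals in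
`(Ideal (𝓞 L))⁰`. -/
def IsAmbiguous (c : ClassGroup (𝓞 L)) : Prop :=
  (∃ n : ℕ, c ^ p ^ n = 1) ∧ ∃ I : (Ideal (𝓞 L))⁰, ClassGroup.mk0 I = c ∧
    ∃ J : (Ideal (𝓞 L))⁰, (J : Ideal (𝓞 L)) = σ • (I : Ideal (𝓞 L)) ∧ ClassGroup.mk0 J = c

def IsStronglyAmbiguous (c : ClassGroup (𝓞 L)) : Prop :=
  (∃ n : ℕ, c ^ p ^ n = 1) ∧
    ∃ I : (Ideal (𝓞 L))⁰, ClassGroup.mk0 I = c ∧ σ • (I : Ideal (𝓞 L)) = I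

variable {p σ}

theorem isAmbiguous_mk0 {I : (Ideal (𝓞 L))⁰} (hI : ∃ n : ℕ, ClassGroup.mk0 I ^ p ^ n = 1) {α : Lˣ}
    (h : ((σ • (I : Ideal (𝓞 L)) : Ideal (𝓞 L)) : FractionalIdeal (𝓞 L)⁰ L) =
      spanSingleton (𝓞 L)⁰ (α : L) * (I : Ideal (𝓞 L))) :
    IsAmbiguous p σ (ClassGroup.mk0 I) :=
  ⟨hI, I, rfl, ⟨σ • (I : Ideal (𝓞 L)), mem_nonZeroDivisors_of_ne_zero
      ((smul_ne_zero_iff_ne σ).mpr (nonZeroDivisors.ne_zero I.2))⟩, rfl,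
    ((ClassGroup.mk0_eq_mk0_iff_exists_fraction_ring L).mpr ⟨α, α.ne_zero, h.symm⟩).symm⟩

variable [NumberField k] [IsGalois k L]

theorem isStronglyAmbiguous_of_norm_eq (hσ : ∀ g, g ∈ Subgroup.zpowers σ)
    {c : ClassGroup (𝓞 L)} (hc : ∃ n : ℕ, c ^ p ^ n = 1) {I : (Ideal (𝓞 L))⁰}
    (hI : ClassGroup.mk0 I = c) {α : Lˣ}
    (h : ((σ • (I : Ideal (𝓞 L)) : Ideal (𝓞 L)) : FractionalIdeal (𝓞 L)⁰ L) =
      spanSingleton (𝓞 L)⁰ (α : L) * (I : Ideal (𝓞 L))) {w : (𝓞 L)ˣ}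
    (hw : Algebra.norm k ((w : 𝓞 L) : L) = Algebra.norm k (α : L)) :
    IsStronglyAmbiguous p σ c := by
  obtain ⟨x, hx, hfix⟩ := exists_smul_span_mul_eq_self_of_norm_eq hσ h hw
  have hxI : Ideal.span {x} * (I : Ideal (𝓞 L)) ∈ (Ideal (𝓞 L))⁰ :=
    mem_nonZeroDivisors_of_ne_zero
      (mul_ne_zero (Ideal.span_singleton_eq_bot.not.mpr hx) (nonZeroDivisors.ne_zero I.2))
  refine ⟨hc, ⟨_, hxI⟩, ?_, hfix⟩
  rw [← hI, ClassGroup.mk0_eq_mk0_iff]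
  exact ⟨1, x, one_ne_zero, hx, by rw [Ideal.span_singleton_one, Ideal.top_mul]⟩

theorem unitsNorm_mem_normsOfUnits_iff (hσ : ∀ g, g ∈ Subgroup.zpowers σ)
    {c : ClassGroup (𝓞 L)} (hc : IsAmbiguous p σ c) {I : (Ideal (𝓞 L))⁰}
    (hI : ClassGroup.mk0 I = c) {α : Lˣ}
    (h : ((σ • (I : Ideal (𝓞 L)) : Ideal (𝓞 L)) : FractionalIdeal (𝓞 L)⁰ L) =
      spanSingleton (𝓞 L)⁰ (α : L) * (I : Ideal (𝓞 L))) :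
    unitsNorm k L α ∈ normsOfUnits k L ↔ IsStronglyAmbiguous p σ c := by
  rw [mem_normsOfUnits_iff]
  refine ⟨fun ⟨w, hw⟩ => isStronglyAmbiguous_of_norm_eq hσ hc.1 hI h hw, ?_⟩
  rintro ⟨-, J, hJ, hfix⟩
  exact exists_units_norm_eq_of_mk0_eq (hI.trans hJ.symm) hfix h

theorem exists_isAmbiguous_mul_inv_mem_normsOfUnits (hp : p.Prime)
    (hdeg : Module.finrank k L = p) (hσ : ∀ g, g ∈ Subgroup.zpowers σ) {ε : kˣ}
    (hε : ε ∈ (Units.map (algebraMap (𝓞 k) k).toMonoidHom).range ⊓ (unitsNorm k L).range) :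
    ∃ (c : ClassGroup (𝓞 L)) (I : (Ideal (𝓞 L))⁰) (α : Lˣ), IsAmbiguous p σ c ∧
      ClassGroup.mk0 I = c ∧
      ((σ • (I : Ideal (𝓞 L)) : Ideal (𝓞 L)) : FractionalIdeal (𝓞 L)⁰ L) =
        spanSingleton (𝓞 L)⁰ (α : L) * (I : Ideal (𝓞 L)) ∧
      ε * (unitsNorm k L α)⁻¹ ∈ normsOfUnits k L := by
  obtain ⟨⟨u, rfl⟩, α, hα⟩ := hε
  obtain ⟨I, hI, h⟩ := exists_smul_eq_of_algebraMap_eq_norm hσ (congrArg Units.val hα).symm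
  let I' : (Ideal (𝓞 L))⁰ := ⟨I, mem_nonZeroDivisors_of_ne_zero hI⟩
  obtain ⟨t, n, ht, hn⟩ :=
    exists_mod_eq_one_pow_pow_prime_pow_eq_one hp (isOfFinOrder_of_finite (ClassGroup.mk0 I'))
  have hrel : ((σ • ((I' ^ t : (Ideal (𝓞 L))⁰) : Ideal (𝓞 L)) : Ideal (𝓞 L)) :
      FractionalIdeal (𝓞 L)⁰ L) = spanSingleton (𝓞 L)⁰ ((α ^ t : Lˣ) : L) *
        ((I' ^ t : (Ideal (𝓞 L))⁰) : Ideal (𝓞 L)) := by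
    rw [SubmonoidClass.coe_pow]
    exact coeIdeal_smul_pow_eq h t
  have hord : ∃ n : ℕ, ClassGroup.mk0 (I' ^ t) ^ p ^ n = 1 := ⟨n, by rwa [map_pow]⟩
  refine ⟨_, I' ^ t, α ^ t, isAmbiguous_mk0 hord hrel, rfl, hrel, ?_⟩
  rw [map_pow, hα, ← Nat.div_add_mod t p, ht, pow_add, pow_one, pow_mul, mul_inv_rev,
    mul_inv_cancel_left]
  exact inv_mem (pow_mem (hdeg ▸ units_pow_finrank_mem_normsOfUnits u) _)

theorem IsAmbiguous.isStronglyAmbiguous_pow (hdeg : Module.finrank k L = p)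
    (hσ : ∀ g, g ∈ Subgroup.zpowers σ) {c : ClassGroup (𝓞 L)} (hc : IsAmbiguous p σ c) :
    IsStronglyAmbiguous p σ (c ^ p) := by
  obtain ⟨⟨n, hn⟩, I, rfl, J, hJ, hJc⟩ := hc
  obtain ⟨γ, hγ, hγI⟩ := (ClassGroup.mk0_eq_mk0_iff_exists_fraction_ring L).mp hJc.symm
  have h : ((σ • (I : Ideal (𝓞 L)) : Ideal (𝓞 L)) : FractionalIdeal (𝓞 L)⁰ L) =
      spanSingleton (𝓞 L)⁰ ((Units.mk0 γ hγ : Lˣ) : L) * (I : Ideal (𝓞 L)) := by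
    rw [← hJ, ← hγI, Units.val_mk0]
  obtain ⟨u, hu⟩ := exists_units_algebraMap_eq_norm_of_smul_eq (nonZeroDivisors.ne_zero I.2) h
  obtain ⟨w, hw⟩ := mem_normsOfUnits_iff.mp (units_pow_finrank_mem_normsOfUnits (L := L) u)
  refine isStronglyAmbiguous_of_norm_eq hσ ⟨n, by rw [← pow_mul, mul_comm, pow_mul, hn, one_pow]⟩
    (map_pow _ _ _) (coeIdeal_smul_pow_eq h p) (w := w) ?_
  rw [hw, Units.val_pow_eq_pow_val, Units.val_pow_eq_pow_val, hdeg, map_pow]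
  exact congrArg (· ^ p) hu

end AmbiguousClasses

theorem ambiguous_class_exact_sequence_general (p : ℕ) (hp : p.Prime)
    (k L : Type*) [Field k] [Field L] [NumberField k] [NumberField L]
    [Algebra k L] [IsGalois k L]
    (hdeg : Module.finrank k L = p)
    (σ : L ≃ₐ[k] L) (hgen : ∀ g : L ≃ₐ[k] L, g ∈ Subgroup.zpowers σ) :
    let σR : 𝓞 L →+* 𝓞 L := (galRestrict (𝓞 k) k L (𝓞 L) σ).toRingEquiv.toRingHom
    let Ek : Subgroup kˣ := (Units.map (algebraMap (𝓞 k) k).toMonoidHom).range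
    let Nfield : Lˣ →* kˣ := Units.map (Algebra.norm k : L →* k)
    let NLx : Subgroup kˣ := Nfield.range
    let NEL : Subgroup kˣ :=
      (Nfield.comp (Units.map (algebraMap (𝓞 L) L).toMonoidHom)).range
    let Amb : ClassGroup (𝓞 L) → Prop := fun c =>
      (∃ n : ℕ, c ^ p ^ n = 1) ∧
      ∃ I : (Ideal (𝓞 L))⁰, ClassGroup.mk0 I = c ∧
        ∃ J : (Ideal (𝓞 L))⁰, (J : Ideal (𝓞 L)) = Ideal.map σR (I : Ideal (𝓞 L)) ∧
          ClassGroup.mk0 J = c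
    let AmbSt : ClassGroup (𝓞 L) → Prop := fun c =>
      (∃ n : ℕ, c ^ p ^ n = 1) ∧
      ∃ I : (Ideal (𝓞 L))⁰, ClassGroup.mk0 I = c ∧
        Ideal.map σR (I : Ideal (𝓞 L)) = (I : Ideal (𝓞 L))
    (∀ c : ClassGroup (𝓞 L), Amb c →
      ∀ I : (Ideal (𝓞 L))⁰, ClassGroup.mk0 I = c →
      ∀ α : Lˣ,
        (Ideal.map σR (I : Ideal (𝓞 L)) : FractionalIdeal (𝓞 L)⁰ L) =
          FractionalIdeal.spanSingleton (𝓞 L)⁰ (α : L) *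
            ((I : Ideal (𝓞 L)) : FractionalIdeal (𝓞 L)⁰ L) →
        (Nfield α ∈ Ek ⊓ NLx ∧ (Nfield α ∈ NEL ↔ AmbSt c))) ∧
    (∀ ε : kˣ, ε ∈ Ek ⊓ NLx →
      ∃ (c : ClassGroup (𝓞 L)) (I : (Ideal (𝓞 L))⁰) (α : Lˣ), Amb c ∧
        ClassGroup.mk0 I = c ∧
        (Ideal.map σR (I : Ideal (𝓞 L)) : FractionalIdeal (𝓞 L)⁰ L) =
          FractionalIdeal.spanSingleton (𝓞 L)⁰ (α : L) *
            ((I : Ideal (𝓞 L)) : FractionalIdeal (𝓞 L)⁰ L) ∧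
        ε * (Nfield α)⁻¹ ∈ NEL) ∧
    (∀ c : ClassGroup (𝓞 L), Amb c → AmbSt (c ^ p)) := by
  intro σR Ek Nfield NLx NEL Amb AmbSt
  have hσR : ∀ I, Ideal.map σR I = σ • I := fun I => (smul_eq_map_galRestrict σ I).symm
  simp only [Amb, AmbSt, hσR]
  refine ⟨fun c hc I hI α hα => ⟨⟨?_, α, rfl⟩, unitsNorm_mem_normsOfUnits_iff hgen hc hI hα⟩,
    fun ε hε => exists_isAmbiguous_mul_inv_mem_normsOfUnits hp hdeg hgen hε,
    fun c hc => IsAmbiguous.isStronglyAmbiguous_pow hdeg hgen hc⟩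
  obtain ⟨u, hu⟩ := exists_units_algebraMap_eq_norm_of_smul_eq (nonZeroDivisors.ne_zero I.2) hα
  exact ⟨u, Units.ext hu⟩

/-- The exact sequence `1 → Am_st → Am → (E_k ∩ N L^×)/N E_L → 1` for a cyclic extension
`L/k` of number fields of odd prime degree `p` with Galois group `⟨σ⟩`.  Here `Am` consists
of the ambiguous classes of the `p`-class group of `L` (classes of `p`-power order fixed by
`σ`), `Am_st` of the strongly ambiguous ones (represented by a `σ`-invariant ideal), and
`θ([𝔞]) = N_{L/k}(α) mod N E_L` whenever `𝔞^{σ-1} = (α)`.  The statement asserts: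
(1) for every ambiguous class `c`, every representing ideal `I` and every `α ∈ L^×` with
`σ(I) = (α)I`, the norm of `α` lies in `E_k ∩ N L^×`, and it lies in `N E_L` iff `c` is
strongly ambiguous (exactness at `Am`, i.e. `ker θ = Am_st`, together with well-definedness);
(2) every class of `(E_k ∩ N L^×)/N E_L` arises this way (surjectivity of `θ`);
(3) `Am/Am_st` is elementary abelian: `c^p` is strongly ambiguous for all ambiguous `c`. -/
theorem ambiguous_class_exact_sequence (p : ℕ) (hp : p.Prime) (hodd : Odd p)
    (k L : Type*) [Field k] [Field L] [NumberField k] [NumberField L]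
    [Algebra k L] [IsGalois k L] [FiniteDimensional k L]
    (hdeg : Module.finrank k L = p)
    (σ : L ≃ₐ[k] L) (hgen : ∀ g : L ≃ₐ[k] L, g ∈ Subgroup.zpowers σ) :
    let σR : 𝓞 L →+* 𝓞 L := (galRestrict (𝓞 k) k L (𝓞 L) σ).toRingEquiv.toRingHom
    let Ek : Subgroup kˣ := (Units.map (algebraMap (𝓞 k) k).toMonoidHom).range
    let Nfield : Lˣ →* kˣ := Units.map (Algebra.norm k : L →* k)
    let NLx : Subgroup kˣ := Nfield.range
    let NEL : Subgroup kˣ :=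
      (Nfield.comp (Units.map (algebraMap (𝓞 L) L).toMonoidHom)).range
    let Amb : ClassGroup (𝓞 L) → Prop := fun c =>
      (∃ n : ℕ, c ^ p ^ n = 1) ∧
      ∃ I : (Ideal (𝓞 L))⁰, ClassGroup.mk0 I = c ∧
        ∃ J : (Ideal (𝓞 L))⁰, (J : Ideal (𝓞 L)) = Ideal.map σR (I : Ideal (𝓞 L)) ∧
          ClassGroup.mk0 J = c
    let AmbSt : ClassGroup (𝓞 L) → Prop := fun c =>
      (∃ n : ℕ, c ^ p ^ n = 1) ∧
      ∃ I : (Ideal (𝓞 L))⁰, ClassGroup.mk0 I = c ∧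
        Ideal.map σR (I : Ideal (𝓞 L)) = (I : Ideal (𝓞 L))
    (∀ c : ClassGroup (𝓞 L), Amb c →
      ∀ I : (Ideal (𝓞 L))⁰, ClassGroup.mk0 I = c →
      ∀ α : Lˣ,
        (Ideal.map σR (I : Ideal (𝓞 L)) : FractionalIdeal (𝓞 L)⁰ L) =
          FractionalIdeal.spanSingleton (𝓞 L)⁰ (α : L) *
            ((I : Ideal (𝓞 L)) : FractionalIdeal (𝓞 L)⁰ L) →
        (Nfield α ∈ Ek ⊓ NLx ∧ (Nfield α ∈ NEL ↔ AmbSt c))) ∧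
    (∀ ε : kˣ, ε ∈ Ek ⊓ NLx →
      ∃ (c : ClassGroup (𝓞 L)) (I : (Ideal (𝓞 L))⁰) (α : Lˣ), Amb c ∧
        ClassGroup.mk0 I = c ∧
        (Ideal.map σR (I : Ideal (𝓞 L)) : FractionalIdeal (𝓞 L)⁰ L) =
          FractionalIdeal.spanSingleton (𝓞 L)⁰ (α : L) *
            ((I : Ideal (𝓞 L)) : FractionalIdeal (𝓞 L)⁰ L) ∧
        ε * (Nfield α)⁻¹ ∈ NEL) ∧
    (∀ c : ClassGroup (𝓞 L), Amb c → AmbSt (c ^ p)) :=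
  ambiguous_class_exact_sequence_general p hp k L hdeg σ hgen
end

section
/- Let $G = \langle \sigma \rangle$ be a group of prime order $p$ (p odd) acting on a finite abelian $p$-group $A$ such that the fixed subgroup $A^G = \{a \in A : a^{\sigma} = a\}$ has order exactly $p$. Let $\nu = 1 + \sigma + \cdots + \sigma^{p-1}$, let $n$ be the smallest positive integer with $A^{(\sigma-1)^n} = 1$, and write $n = \alpha(p-1) + \beta$ with $0 \le \beta \le p-2$. If $A^{\nu} = 1$, then $A \cong (\mathbb{Z}/p^{\alpha+1}\mathbb{Z})^{\beta} \times (\mathbb{Z}/p^{\alpha}\mathbb{Z})^{p-1-\beta}$. In particular $\#A = p^n$ and the $p$-rank of $A$ is at most $p-1$. -/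
/-!
Write `A` additively and let `d = σ - 1`, a nilpotent endomorphism whose kernel `A^G` has prime
order `p`. This kernel equals `d^(n-1) A`, a nonzero subgroup of it, so it lies in every `d^i A`
with `i < n`; hence each step `d^i A → d^(i+1) A` divides the order by exactly `p`, and
`#A = p^n`. Likewise `A / dA` has order `p`, so any `x ∉ dA` generates `A` as a `ℤ[d]`-module
(Nakayama for the nilpotent `d`).
The norm is `ν = ∑ (1 + d)^k = ∑ C(p, k + 1) d^k`. From `ν = 0` we get
`d^(p-1) ∈ ∑_{k < p-1} ℤ d^k`, so `x, d x, …, d^(p-2) x` generate `A`; and since `p` divides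
`C(p, k + 1)` for `0 < k < p - 1`, with `C(p, 1) = p`, we get `p = u d^(p-1)` for a unit `u`
commuting with `d`, so `p^a` kills whatever `d^((p-1)a)` kills. Hence `d^i x` has order dividing
`p^(α+1)`, and `p^α` when `i ≥ β`; the induced map from `(ℤ/p^(α+1))^β × (ℤ/p^α)^(p-1-β)`
onto `A` is a bijection since both sides have `p^n` elements.
-/

open Finset

theorem sum_range_add_one_pow {R : Type*} [Ring R] (x : R) (N : ℕ) :
    ∑ i ∈ range N, (x + 1) ^ i = ∑ i ∈ range N, (N.choose (i + 1) : R) * x ^ i := by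
  simpa using
    congrArg (Polynomial.aeval x) (Polynomial.geom_sum_X_comp_X_add_one_eq_sum (R := ℤ) N)

theorem pow_sub_one_eq_neg_sum_of_geom_sum_eq_zero {R : Type*} [Ring R] {x : R} {N : ℕ}
    (hN : 0 < N) (h : ∑ i ∈ range N, (x + 1) ^ i = 0) :
    x ^ (N - 1) = -∑ i ∈ range (N - 1), (N.choose (i + 1) : R) * x ^ i := by
  rw [sum_range_add_one_pow, ← Nat.sub_add_cancel hN, sum_range_succ, Nat.sub_add_cancel hN,
    Nat.choose_self, Nat.cast_one, one_mul] at h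
  exact eq_neg_of_add_eq_zero_right h

theorem exists_sum_range_choose_mul_pow_eq {R : Type*} [Ring R] {p : ℕ} (hp : p.Prime) (x : R) :
    ∃ r : R, Commute x r ∧
      ∑ i ∈ range (p - 1), (p.choose (i + 1) : R) * x ^ i = p * (1 + x * r) := by
  obtain ⟨m, rfl⟩ : ∃ m, p = m + 2 := ⟨p - 2, by have := hp.two_le; omega⟩
  refine ⟨∑ j ∈ range m, (((m + 2).choose (j + 2) / (m + 2) : ℕ) : R) * x ^ j,
    .sum_right _ _ _ fun j _ => (Nat.cast_commute _ x).symm.mul_right (.pow_right (.refl x) j), ?_⟩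
  rw [show m + 2 - 1 = m + 1 by omega, sum_range_succ', mul_add, mul_one, mul_sum, mul_sum,
    add_comm]
  simp only [zero_add, Nat.choose_one_right, pow_zero, mul_one]
  congr 1
  refine sum_congr rfl fun j hj => ?_
  obtain ⟨c, hc⟩ : m + 2 ∣ (m + 2).choose (j + 2) :=
    hp.dvd_choose_self (by omega) (by have := mem_range.mp hj; omega)
  rw [hc, Nat.mul_div_cancel_left _ (by omega), Nat.cast_mul, pow_succ', mul_assoc,
    ← mul_assoc (c : R), (Nat.cast_commute c x).eq, mul_assoc]

theorem exists_commute_natCast_eq_mul_pow {R : Type*} [Ring R] {p : ℕ} (hp : p.Prime) {x : R}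
    (hx : IsNilpotent x) (h : ∑ i ∈ range p, (x + 1) ^ i = 0) :
    ∃ v : R, Commute v x ∧ (p : R) = v * x ^ (p - 1) := by
  obtain ⟨r, hxr, hsum⟩ := exists_sum_range_choose_mul_pow_eq hp x
  have hu : IsUnit (1 + x * r) := (hxr.isNilpotent_mul_right hx).isUnit_one_add
  have hux : Commute (1 + x * r) x :=
    (Commute.one_left x).add_left ((Commute.refl x).mul_left hxr.symm)
  refine ⟨-↑hu.unit⁻¹, (Commute.units_inv_left hux).neg_left, ?_⟩
  rw [pow_sub_one_eq_neg_sum_of_geom_sum_eq_zero hp.pos h, hsum, neg_mul_neg,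
    (Nat.cast_commute p (1 + x * r)).eq, ← mul_assoc, IsUnit.val_inv_mul, one_mul]

theorem AddSubgroup.card_eq_card_ker_mul_card_map {G G' : Type*} [AddGroup G] [AddGroup G']
    (f : G →+ G') {H : AddSubgroup G} (h : f.ker ≤ H) :
    Nat.card H = Nat.card f.ker * Nat.card (H.map f) := by
  rw [← (f.domRestrict H).ker.card_mul_index, AddSubgroup.index_ker,
    AddMonoidHom.ker_domRestrict, AddMonoidHom.domRestrict_range,
    Nat.card_congr (AddSubgroup.addSubgroupOfEquivOfLe h).toEquiv]

theorem Subgroup.closure_range_toMul_eq_top {G ι : Type*} [Group G] {f : ι → Additive G}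
    (h : AddSubgroup.closure (Set.range f) = ⊤) :
    Subgroup.closure (Set.range fun i => (f i).toMul) = ⊤ := by
  have := congrArg AddSubgroup.toSubgroup' h
  rwa [AddSubgroup.toSubgroup'_closure, map_top, ← Additive.toMul_symm_eq,
    ← Equiv.image_eq_preimage_symm, ← Set.range_comp] at this

theorem exists_addMonoidHom_pi_zmod_single {M ι : Type*} [AddCommGroup M] [Fintype ι]
    [DecidableEq ι] {q : ℕ} (y : ι → M) (hy : ∀ i, q • y i = 0) :
    ∃ f : (ι → ZMod q) →+ M, ∀ i, f (Pi.single i 1) = y i := by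
  let g i : ZMod q →+ M := ZMod.lift q ⟨zmultiplesHom M (y i), by simpa using hy i⟩
  refine ⟨∑ i, (g i).comp (Pi.evalAddMonoidHom _ i), fun i => ?_⟩
  have hg : g i 1 = y i := by
    simpa using ZMod.lift_coe q ⟨zmultiplesHom M (y i), by simpa using hy i⟩ 1
  rw [AddMonoidHom.finsetSum_apply, sum_eq_single i (fun j _ hj => by simp [hj]) (by simp)]
  simpa using hg

namespace Module.End

variable {M : Type*} [AddCommGroup M] {d : Module.End ℤ M} {p n : ℕ}

theorem ker_le_range_pow [Finite M] (hp : p.Prime) (hker : Nat.card d.toAddMonoidHom.ker = p)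
    (hdn : d ^ n = 0) (hd : d ^ (n - 1) ≠ 0) {i : ℕ} (hi : i < n) :
    d.toAddMonoidHom.ker ≤ (d ^ i).toAddMonoidHom.range := by
  have hle : (d ^ (n - 1)).toAddMonoidHom.range ≤ d.toAddMonoidHom.ker := by
    rintro _ ⟨y, rfl⟩
    simp only [AddMonoidHom.mem_ker, LinearMap.toAddMonoidHom_coe]
    rw [← mul_apply, ← pow_succ', Nat.sub_add_cancel (by omega), hdn, LinearMap.zero_apply]
  have hcard : Nat.card d.toAddMonoidHom.ker ≤ Nat.card (d ^ (n - 1)).toAddMonoidHom.range := by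
    rcases hp.eq_one_or_self_of_dvd _ (hker ▸ AddSubgroup.card_dvd_of_le hle) with h1 | hp'
    · refine absurd (LinearMap.ext fun x => ?_) hd
      have : (d ^ (n - 1)) x ∈ (d ^ (n - 1)).toAddMonoidHom.range := ⟨x, rfl⟩
      rwa [AddSubgroup.card_eq_one.mp h1, AddSubgroup.mem_bot] at this
    · rw [hp', hker]
  rw [← AddSubgroup.eq_of_le_of_card_ge hle hcard]
  rintro _ ⟨y, rfl⟩
  exact ⟨(d ^ (n - 1 - i)) y, by
    simp [← mul_apply, ← pow_add, Nat.add_sub_cancel' (by omega : i ≤ n - 1)]⟩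

theorem card_eq_pow [Finite M] (hp : p.Prime) (hker : Nat.card d.toAddMonoidHom.ker = p)
    (hdn : d ^ n = 0) (hd : d ^ (n - 1) ≠ 0) : Nat.card M = p ^ n := by
  have hstep : ∀ i < n, Nat.card (d ^ i).toAddMonoidHom.range =
      p * Nat.card (d ^ (i + 1)).toAddMonoidHom.range := fun i hi => by
    rw [AddSubgroup.card_eq_card_ker_mul_card_map _ (ker_le_range_pow hp hker hdn hd hi), hker,
      AddMonoidHom.map_range, pow_succ', mul_eq_comp]
    rfl
  have key : ∀ i ≤ n, Nat.card M = p ^ i * Nat.card (d ^ i).toAddMonoidHom.range := by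
    intro i hi
    induction i with
    | zero => simp
    | succ i ih => rw [ih (by omega), hstep i (by omega), ← mul_assoc, ← pow_succ]
  simpa [hdn] using key n le_rfl

theorem zmultiples_sup_range_eq_top [Finite M] (hp : p.Prime)
    (hker : Nat.card d.toAddMonoidHom.ker = p) {x : M} (hx : x ∉ d.toAddMonoidHom.range) :
    AddSubgroup.zmultiples x ⊔ d.toAddMonoidHom.range = ⊤ := by
  set H := AddSubgroup.zmultiples x ⊔ d.toAddMonoidHom.range
  have hle : d.toAddMonoidHom.range ≤ H := le_sup_right
  have hindex : d.toAddMonoidHom.range.index = p := AddSubgroup.index_range.trans hker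
  rcases hp.eq_one_or_self_of_dvd _ (hindex ▸ AddSubgroup.index_dvd_of_le hle) with h1 | hp'
  · exact AddSubgroup.index_eq_one.mp h1
  · have hrel := AddSubgroup.relIndex_mul_index hle
    rw [hp', hindex, Nat.mul_eq_right hp.ne_zero, AddSubgroup.relIndex_eq_one] at hrel
    exact absurd (hrel (AddSubgroup.mem_sup_left (AddSubgroup.mem_zmultiples x))) hx

theorem eq_top_of_sup_range_eq_top {K : AddSubgroup M} (hK : ∀ x ∈ K, d x ∈ K)
    (hd : IsNilpotent d) (h : K ⊔ d.toAddMonoidHom.range = ⊤) : K = ⊤ := by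
  obtain ⟨n, hdn⟩ := hd
  have key : ∀ k, ∀ y : M, ∃ z ∈ K, ∃ w, z + (d ^ k) w = y := by
    intro k
    induction k with
    | zero => exact fun y => ⟨0, K.zero_mem, y, by simp⟩
    | succ k ih =>
      intro y
      obtain ⟨z, hz, _, ⟨w, rfl⟩, rfl⟩ := AddSubgroup.mem_sup.mp (h ▸ AddSubgroup.mem_top y)
      obtain ⟨z', hz', w', rfl⟩ := ih w
      refine ⟨z + d z', K.add_mem hz (hK z' hz'), w', ?_⟩
      simp [pow_succ', add_assoc]
  refine eq_top_iff.mpr fun y _ => ?_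
  obtain ⟨z, hz, w, rfl⟩ := key n y
  simpa [hdn] using hz

theorem exists_notMem_range [Finite M] (h : d.toAddMonoidHom.ker ≠ ⊥) :
    ∃ x, x ∉ d.toAddMonoidHom.range := by
  by_contra! hsurj
  exact h ((AddMonoidHom.ker_eq_bot_iff _).mpr
    (Finite.injective_iff_surjective.mpr fun y => hsurj y))

theorem closure_range_pow_apply_eq_top [Finite M] (hp : p.Prime)
    (hker : Nat.card d.toAddMonoidHom.ker = p) (hd : IsNilpotent d)
    (hν : ∑ i ∈ range p, (d + 1) ^ i = 0) {x : M} (hx : x ∉ d.toAddMonoidHom.range) :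
    AddSubgroup.closure (Set.range fun i : Fin (p - 1) => (d ^ (i : ℕ)) x) = ⊤ := by
  set K := AddSubgroup.closure (Set.range fun i : Fin (p - 1) => (d ^ (i : ℕ)) x)
  have hmem : ∀ i < p - 1, (d ^ i) x ∈ K := fun i hi =>
    AddSubgroup.subset_closure ⟨⟨i, hi⟩, rfl⟩
  have hK : K ≤ K.comap d.toAddMonoidHom := by
    refine (AddSubgroup.closure_le _).mpr ?_
    rintro _ ⟨i, rfl⟩
    change d ((d ^ (i : ℕ)) x) ∈ K
    rw [← mul_apply, ← pow_succ']
    rcases (show (i : ℕ) + 1 ≤ p - 1 from i.2).lt_or_eq with hi | hi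
    · exact hmem _ hi
    · rw [hi, pow_sub_one_eq_neg_sum_of_geom_sum_eq_zero hp.pos hν]
      simp only [LinearMap.neg_apply, LinearMap.sum_apply, mul_apply, natCast_apply]
      exact K.neg_mem (K.sum_mem fun j hj => K.nsmul_mem (hmem j (mem_range.mp hj)) _)
  have hxK : x ∈ K := by simpa using hmem 0 (by have := hp.two_le; omega)
  refine eq_top_of_sup_range_eq_top (fun y hy => hK hy) hd (top_le_iff.mp ?_)
  rw [← zmultiples_sup_range_eq_top hp hker hx]
  exact sup_le_sup_right (AddSubgroup.zmultiples_le.mpr hxK) _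

theorem pow_smul_eq_zero_of_pow_apply_eq_zero {v : Module.End ℤ M} (hv : Commute v d)
    (hpv : (p : Module.End ℤ M) = v * d ^ (p - 1)) (a : ℕ) {y : M}
    (hy : (d ^ ((p - 1) * a)) y = 0) : p ^ a • y = 0 := by
  have : ((p ^ a : ℕ) : Module.End ℤ M) = v ^ a * d ^ ((p - 1) * a) := by
    rw [Nat.cast_pow, hpv, (hv.pow_right (p - 1)).mul_pow, pow_mul]
  rw [← natCast_apply (R := ℤ), this, mul_apply, hy, map_zero]

theorem nonempty_addEquiv_pi_zmod [Finite M] (hp : p.Prime)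
    (hker : Nat.card d.toAddMonoidHom.ker = p) (hdn : d ^ n = 0) (hd : d ^ (n - 1) ≠ 0)
    (hν : ∑ i ∈ range p, (d + 1) ^ i = 0) {x : M}
    (hx : AddSubgroup.closure (Set.range fun i : Fin (p - 1) => (d ^ (i : ℕ)) x) = ⊤)
    {α β : ℕ} (hβ : β ≤ p - 1) (hn : n = α * (p - 1) + β) :
    Nonempty (((Fin β → ZMod (p ^ (α + 1))) × (Fin (p - 1 - β) → ZMod (p ^ α))) ≃+ M) := by
  obtain ⟨v, hv, hpv⟩ := exists_commute_natCast_eq_mul_pow hp ⟨n, hdn⟩ hν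
  have hkill : ∀ a k, n ≤ (p - 1) * a + k → p ^ a • (d ^ k) x = 0 := fun a k h =>
    pow_smul_eq_zero_of_pow_apply_eq_zero hv hpv a
      (by rw [← mul_apply, ← pow_add, pow_eq_zero_of_le h hdn, LinearMap.zero_apply])
  obtain ⟨f, hf⟩ := exists_addMonoidHom_pi_zmod_single (q := p ^ (α + 1))
    (fun i : Fin β => (d ^ (i : ℕ)) x)
    fun i => hkill _ _ (by rw [hn, mul_add, mul_comm]; omega)
  obtain ⟨g, hg⟩ := exists_addMonoidHom_pi_zmod_single (q := p ^ α)
    (fun j : Fin (p - 1 - β) => (d ^ (β + j : ℕ)) x)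
    fun j => hkill _ _ (by rw [hn, mul_comm]; omega)
  have hsurj : Function.Surjective (f.coprod g) := by
    rw [← AddMonoidHom.range_eq_top, eq_top_iff, ← hx, AddSubgroup.closure_le]
    rintro _ ⟨i, rfl⟩
    by_cases hi : (i : ℕ) < β
    · exact ⟨(Pi.single ⟨i, hi⟩ 1, 0), by simp [hf]⟩
    · refine ⟨(0, Pi.single ⟨i - β, by omega⟩ 1), ?_⟩
      simp [hg, Nat.add_sub_cancel' (not_lt.mp hi)]
  have hcard : Nat.card ((Fin β → ZMod (p ^ (α + 1))) × (Fin (p - 1 - β) → ZMod (p ^ α))) =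
      Nat.card M := by
    obtain ⟨γ, hγ⟩ : ∃ γ, p - 1 = β + γ := ⟨p - 1 - β, by omega⟩
    rw [card_eq_pow hp hker hdn hd, hn, hγ, Nat.add_sub_cancel_left]
    simp only [Nat.card_prod, Nat.card_pi, Nat.card_zmod, prod_const, card_univ,
      Fintype.card_fin, ← pow_mul, ← pow_add]
    ring_nf
  have : NeZero p := ⟨hp.ne_zero⟩
  exact ⟨AddEquiv.ofBijective _ (hsurj.bijective_of_nat_card_le hcard.le)⟩

end Module.End

namespace MulAut

variable {A : Type*} [CommGroup A] (σ : MulAut A)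

def toEndSubOne : Module.End ℤ (Additive A) :=
  (MulEquiv.toAdditive σ).toAddMonoidHom.toIntLinearMap - 1

theorem toEndSubOne_apply (x : Additive A) :
    σ.toEndSubOne x = Additive.ofMul (σ x.toMul * x.toMul⁻¹) := by
  simp [toEndSubOne, ← div_eq_mul_inv]

theorem toEndSubOne_pow_apply (k : ℕ) (a : A) :
    (σ.toEndSubOne ^ k) (Additive.ofMul a) = Additive.ofMul ((fun a => σ a * a⁻¹)^[k] a) := by
  induction k generalizing a with
  | zero => rfl
  | succ k ih =>
    rw [pow_succ, Module.End.mul_apply, toEndSubOne_apply, ih, Function.iterate_succ_apply]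
    rfl

theorem toEndSubOne_pow_eq_zero_iff (k : ℕ) :
    σ.toEndSubOne ^ k = 0 ↔ ∀ a : A, (fun a => σ a * a⁻¹)^[k] a = 1 := by
  refine ⟨fun h a => ?_, fun h => LinearMap.ext fun x => ?_⟩
  · rw [← ofMul_eq_zero, ← toEndSubOne_pow_apply, h, LinearMap.zero_apply]
  · rw [← ofMul_toMul x, toEndSubOne_pow_apply, h, LinearMap.zero_apply]
    rfl

theorem toEndSubOne_add_one :
    σ.toEndSubOne + 1 = (MulEquiv.toAdditive σ).toAddMonoidHom.toIntLinearMap :=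
  sub_add_cancel _ _

theorem toEndSubOne_add_one_pow_apply (k : ℕ) (a : A) :
    ((σ.toEndSubOne + 1) ^ k) (Additive.ofMul a) = Additive.ofMul ((σ ^ k) a) := by
  rw [toEndSubOne_add_one]
  induction k generalizing a with
  | zero => rfl
  | succ k ih => rw [pow_succ, Module.End.mul_apply, pow_succ, MulAut.mul_apply, ← ih]; rfl

theorem card_ker_toEndSubOne :
    Nat.card σ.toEndSubOne.toAddMonoidHom.ker = Nat.card {a : A // σ a = a} :=
  Nat.card_congr <| Equiv.subtypeEquiv Additive.toMul fun x => by
    rw [AddMonoidHom.mem_ker, LinearMap.toAddMonoidHom_coe, toEndSubOne_apply, ofMul_eq_zero,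
      mul_inv_eq_one]

theorem sum_range_toEndSubOne_add_one_pow_eq_zero {p : ℕ}
    (h : ∀ a : A, ∏ k ∈ range p, (σ ^ k) a = 1) :
    ∑ i ∈ range p, (σ.toEndSubOne + 1) ^ i = 0 :=
  LinearMap.ext fun x => by
    obtain ⟨a, rfl⟩ := Additive.ofMul.surjective x
    rw [LinearMap.sum_apply, LinearMap.zero_apply]
    simp only [toEndSubOne_add_one_pow_apply, ← ofMul_prod, h]
    rfl

end MulAut

theorem gras_structure_theorem_general (p : ℕ) (hp : p.Prime)
    (A : Type*) [CommGroup A] [Fintype A]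
    (σ : MulAut A)
    (hfix : Nat.card {a : A // σ a = a} = p)
    (D : A → A) (hD : D = fun a => σ a * a⁻¹)
    (n : ℕ)
    (hn : ∀ a : A, D^[n] a = 1)
    (hmin : ∀ j, 0 < j → j < n → ∃ a : A, D^[j] a ≠ 1)
    (hnu : ∀ a : A, ∏ k ∈ Finset.range p, (σ ^ k) a = 1)
    (α β : ℕ) (hβ : β ≤ p - 2) (hnab : n = α * (p - 1) + β) :
    Nonempty (A ≃* Multiplicative ((Fin β → ZMod (p ^ (α + 1))) × (Fin (p - 1 - β) → ZMod (p ^ α)))) ∧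
    Nat.card A = p ^ n ∧
    ∃ S : Finset A, S.card ≤ p - 1 ∧ Subgroup.closure (S : Set A) = ⊤ := by
  classical
  subst hD
  set d := σ.toEndSubOne
  have hker : Nat.card d.toAddMonoidHom.ker = p := σ.card_ker_toEndSubOne.trans hfix
  have hdn : d ^ n = 0 := (σ.toEndSubOne_pow_eq_zero_iff n).mpr hn
  have hd : d ^ (n - 1) ≠ 0 := by
    rw [Ne, σ.toEndSubOne_pow_eq_zero_iff, not_forall]
    rcases Nat.lt_or_ge 1 n with h | h
    · exact hmin (n - 1) (by omega) (by omega)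
    · have : Nontrivial A := Finite.one_lt_card_iff_nontrivial.mp
        ((hfix ▸ hp.one_lt).trans_le (Finite.card_subtype_le _))
      simpa [show n - 1 = 0 by omega] using exists_ne (1 : A)
  have hν := σ.sum_range_toEndSubOne_add_one_pow_eq_zero hnu
  obtain ⟨x, hx⟩ := Module.End.exists_notMem_range
    ((AddSubgroup.one_lt_card_iff_ne_bot _).mp (hker ▸ hp.one_lt))
  have hgen := Module.End.closure_range_pow_apply_eq_top hp hker ⟨n, hdn⟩ hν hx
  obtain ⟨e⟩ := Module.End.nonempty_addEquiv_pi_zmod hp hker hdn hd hν hgen (by omega) hnab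
  refine ⟨⟨AddEquiv.toMultiplicativeRight e.symm⟩,
    (Module.End.card_eq_pow hp hker hdn hd : Nat.card (Additive A) = p ^ n),
    univ.image fun i : Fin (p - 1) => ((d ^ (i : ℕ)) x).toMul,
    card_image_le.trans_eq (card_fin _), ?_⟩
  simpa using Subgroup.closure_range_toMul_eq_top hgen

/-- G. Gras's structure theorem (norm-trivial case): let `G = ⟨σ⟩` of odd prime order `p` act
on a finite abelian `p`-group `A` with `#A^G = p`.  Let `n` be the smallest positive integer
with `A^{(σ-1)^n} = 1` and write `n = α(p-1) + β`, `0 ≤ β ≤ p-2`.  If the norm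
`ν = 1 + σ + ⋯ + σ^{p-1}` kills `A`, then
`A ≅ (ℤ/p^{α+1})^β × (ℤ/p^α)^{p-1-β}`; in particular `#A = p^n` and the `p`-rank of `A`
is at most `p-1`. -/
theorem gras_structure_theorem (p : ℕ) (hp : p.Prime) (hodd : Odd p)
    (A : Type*) [CommGroup A] [Fintype A] (hA : IsPGroup p A)
    (σ : MulAut A) (hσ : σ ^ p = 1)
    (hfix : Nat.card {a : A // σ a = a} = p)
    (D : A → A) (hD : D = fun a => σ a * a⁻¹)
    (n : ℕ) (hnpos : 0 < n)
    (hn : ∀ a : A, D^[n] a = 1)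
    (hmin : ∀ j, 0 < j → j < n → ∃ a : A, D^[j] a ≠ 1)
    (hnu : ∀ a : A, ∏ k ∈ Finset.range p, (σ ^ k) a = 1)
    (α β : ℕ) (hβ : β ≤ p - 2) (hnab : n = α * (p - 1) + β) :
    Nonempty (A ≃* Multiplicative ((Fin β → ZMod (p ^ (α + 1))) × (Fin (p - 1 - β) → ZMod (p ^ α)))) ∧
    Nat.card A = p ^ n ∧
    ∃ S : Finset A, S.card ≤ p - 1 ∧ Subgroup.closure (S : Set A) = ⊤ :=
  gras_structure_theorem_general p hp A σ hfix D hD n hn hmin hnu α β hβ hnab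
end

section
/- Let $p$ be an odd prime and let $\Gamma$ be the nonabelian group of order $p^3$ and exponent $p^2$ (the modular/extraspecial group of exponent $p^2$). Then there is no automorphism of $\Gamma$ of order $2$ that acts as inversion on the abelianization $\Gamma/\Gamma'$ (equivalently, every order-2 automorphism of $\Gamma$ fixes one of the two generators of $\Gamma/\Gamma' \cong (\mathbb{Z}/p\mathbb{Z})^2$ pointwise, acting as $-1$ on at most one generator). -/
/-!
As `Γ / Z(Γ)` has order `p²`, it is abelian, so `Γ' ≤ Z(Γ)` and an endomorphism `φ` inducing
inversion on `Γ / Γ'` has the form `φ x = c x⁻¹` with `c` central. Central factors drop out of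
commutators and `⁅x⁻¹, y⁻¹⁆` is conjugate to the central `⁅x, y⁆`, so `φ` fixes every commutator.
On the other hand, for `a` of order `p²` the element `a ^ p ≠ 1` is central and
`φ (a ^ p) = c ^ p a⁻ᵖ = a⁻ᵖ`; since `Z(Γ)` has prime order it is generated by `a ^ p`, so `φ`
inverts it. A nontrivial commutator would thus equal its own inverse, impossible in odd order.
-/

open Subgroup
open scoped commutatorElement

section

variable {G : Type*} [Group G]

theorem commutatorElement_inv_inv_eq_of_mem_center {x y : G} (h : ⁅x, y⁆ ∈ center G) :
    ⁅x⁻¹, y⁻¹⁆ = ⁅x, y⁆ := calc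
  ⁅x⁻¹, y⁻¹⁆ = (x⁻¹ * y⁻¹) * ⁅x, y⁆ * (x⁻¹ * y⁻¹)⁻¹ := by group
  _ = ⁅x, y⁆ := by rw [mem_center_iff.1 h, mul_inv_cancel_right]

theorem commutatorElement_mul_left_of_mem_center {c : G} (hc : c ∈ center G) (x y : G) :
    ⁅c * x, y⁆ = ⁅x, y⁆ := calc
  ⁅c * x, y⁆ = c * (x * y * x⁻¹) * c⁻¹ * y⁻¹ := by group
  _ = x * y * x⁻¹ * c * c⁻¹ * y⁻¹ := by rw [← mem_center_iff.1 hc]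
  _ = ⁅x, y⁆ := by group

theorem commutatorElement_mul_right_of_mem_center {c : G} (hc : c ∈ center G) (x y : G) :
    ⁅x, c * y⁆ = ⁅x, y⁆ := by
  rw [← commutatorElement_inv, commutatorElement_mul_left_of_mem_center hc, commutatorElement_inv]

theorem map_commutatorElement_eq_self {φ : G →* G} (hφ : ∀ x, φ x * x ∈ center G) {x y : G}
    (hxy : ⁅x, y⁆ ∈ center G) : φ ⁅x, y⁆ = ⁅x, y⁆ := by
  have hφ_decomp (z : G) : φ z = (φ z * z) * z⁻¹ := by group
  rw [map_commutatorElement, hφ_decomp x, hφ_decomp y,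
    commutatorElement_mul_left_of_mem_center (hφ x),
    commutatorElement_mul_right_of_mem_center (hφ y),
    commutatorElement_inv_inv_eq_of_mem_center hxy]

theorem map_pow_eq_inv_of_mul_mem_center {φ : G →* G} {a : G} (ha : φ a * a ∈ center G) {n : ℕ}
    (hn : (φ a * a) ^ n = 1) : φ (a ^ n) = (a ^ n)⁻¹ := by
  have hcomm : Commute (φ a * a) a⁻¹ := (mem_center_iff.1 ha a⁻¹).symm
  rw [map_pow, ← mul_inv_cancel_right (φ a) a, hcomm.mul_pow, hn, one_mul, inv_pow]

theorem eq_one_of_inv_eq_self_of_pow_odd_eq_one {z : G} (hz : z⁻¹ = z) {n : ℕ} (hn : Odd n)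
    (hzn : z ^ n = 1) : z = 1 := by
  have hz2 : z ^ 2 = 1 := by
    rw [sq]
    nth_rw 1 [← hz]
    exact inv_mul_cancel z
  obtain ⟨k, rfl⟩ := hn
  rwa [pow_succ, pow_mul, hz2, one_pow, one_mul] at hzn

theorem mul_mem_commutator_of_map_abelianization_eq_inv {φ : G →* G}
    (hφ : ∀ x, Abelianization.map φ x = x⁻¹) (x : G) : φ x * x ∈ commutator G := by
  rw [← Abelianization.ker_of, MonoidHom.mem_ker, map_mul, ← Abelianization.map_of, hφ,
    inv_mul_cancel]

section PrimeCube

variable {p : ℕ} [hp : Fact p.Prime]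

theorem map_eq_inv_of_card_eq_prime {H : Subgroup G}
    (hH : Nat.card H = p) {φ : G →* G} {w : G} (hwH : w ∈ H) (hw : w ≠ 1) (hφw : φ w = w⁻¹)
    {z : G} (hz : z ∈ H) : φ z = z⁻¹ := by
  obtain ⟨k, hk⟩ := mem_zpowers_iff.1
    (mem_zpowers_of_prime_card hH (g := ⟨w, hwH⟩) (g' := ⟨z, hz⟩) (by simpa using hw))
  have hwz : w ^ k = z := congrArg Subtype.val hk
  rw [← hwz, map_zpow, hφw, inv_zpow]

theorem not_card_quotient_center_dvd_prime (hnc : ¬ IsMulCommutative G) :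
    ¬ Nat.card (G ⧸ center G) ∣ p := fun h ↦
  have := isCyclic_of_card_dvd_prime h
  hnc (isMulCommutative_of_isCyclic_quotient_center_self G)

theorem card_center_eq_prime_of_card_eq_prime_cube (hG : Nat.card G = p ^ 3)
    (hnc : ¬ IsMulCommutative G) : Nat.card (center G) = p := by
  obtain ⟨k, hk0, hk⟩ := IsPGroup.card_center_eq_prime_pow hG three_pos
  have hsplit := card_eq_card_quotient_mul_card_subgroup (center G)
  obtain ⟨j, -, hj⟩ := (Nat.dvd_prime_pow hp.out).1 (hG ▸ Dvd.intro _ hsplit.symm)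
  rw [hG, hj, hk, ← pow_add] at hsplit
  have hjk : 3 = j + k := Nat.pow_right_injective hp.out.two_le hsplit
  have hj2 : 2 ≤ j := by
    by_contra! hj1
    apply not_card_quotient_center_dvd_prime (p := p) hnc
    simpa [hj] using pow_dvd_pow p (show j ≤ 1 by omega)
  rw [hk, show k = 1 by omega, pow_one]

theorem card_quotient_center_eq_prime_sq_of_card_eq_prime_cube (hG : Nat.card G = p ^ 3)
    (hnc : ¬ IsMulCommutative G) : Nat.card (G ⧸ center G) = p ^ 2 := by
  have hsplit := card_eq_card_quotient_mul_card_subgroup (center G)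
  rw [hG, card_center_eq_prime_of_card_eq_prime_cube hG hnc, pow_succ] at hsplit
  exact (Nat.eq_of_mul_eq_mul_right hp.out.pos hsplit).symm

theorem commutator_le_center_of_card_quotient_center_eq_prime_sq
    (hQ : Nat.card (G ⧸ center G) = p ^ 2) : commutator G ≤ center G :=
  Normal.quotient_commutative_iff_commutator_le.1 (IsPGroup.isMulCommutative_of_card_eq_prime_sq hQ)

theorem pow_mem_center_of_card_quotient_center_eq_prime_sq
    (hQ : Nat.card (G ⧸ center G) = p ^ 2) (hnc : ¬ IsMulCommutative G) (x : G) :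
    x ^ p ∈ center G := by
  have : Finite (G ⧸ center G) := Nat.finite_of_card_ne_zero (hQ ▸ pow_ne_zero 2 hp.out.ne_zero)
  obtain ⟨i, hi, hxi⟩ := (Nat.dvd_prime_pow hp.out).1 (hQ ▸ orderOf_dvd_natCard (x : G ⧸ center G))
  have hi2 : i ≠ 2 := by
    rintro rfl
    have := isCyclic_of_orderOf_eq_card _ (hxi.trans hQ.symm)
    exact hnc (isMulCommutative_of_isCyclic_quotient_center_self G)
  rw [← QuotientGroup.eq_one_iff, QuotientGroup.mk_pow, ← orderOf_dvd_iff_pow_eq_one, hxi]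
  simpa using pow_dvd_pow p (show i ≤ 1 by omega)

theorem not_forall_map_abelianization_eq_inv_of_card_eq_prime_cube (hodd : Odd p)
    (hG : Nat.card G = p ^ 3) (hexp : Monoid.exponent G = p ^ 2) (hnc : ¬ IsMulCommutative G)
    (φ : G →* G) : ¬ ∀ x : Abelianization G, Abelianization.map φ x = x⁻¹ := by
  intro hφ
  have hZ := card_center_eq_prime_of_card_eq_prime_cube hG hnc
  have hQ := card_quotient_center_eq_prime_sq_of_card_eq_prime_cube hG hnc
  have hcomm := commutator_le_center_of_card_quotient_center_eq_prime_sq hQ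
  have hφZ (x : G) : φ x * x ∈ center G :=
    hcomm (mul_mem_commutator_of_map_abelianization_eq_inv hφ x)
  have hZp {c : G} (hc : c ∈ center G) : c ^ p = 1 :=
    orderOf_dvd_iff_pow_eq_one.1 (hZ ▸ Subgroup.orderOf_dvd_natCard _ hc)
  obtain ⟨a, ha⟩ := hp.out.exists_orderOf_eq_pow_factorization_exponent G
  rw [hexp, hp.out.factorization_pow, Finsupp.single_eq_same] at ha
  have hap : a ^ p ≠ 1 :=
    pow_ne_one_of_lt_orderOf hp.out.ne_zero (ha ▸ lt_self_pow₀ hp.out.one_lt one_lt_two)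
  have hφap : φ (a ^ p) = (a ^ p)⁻¹ := map_pow_eq_inv_of_mul_mem_center (hφZ a) (hZp (hφZ a))
  obtain ⟨x, y, hxy⟩ : ∃ x y : G, x * y ≠ y * x := by
    simpa [isMulCommutative_iff] using hnc
  have hz : ⁅x, y⁆ ∈ center G := hcomm (commutator_mem_commutator (mem_top x) (mem_top y))
  have hφz : φ ⁅x, y⁆ = ⁅x, y⁆ := map_commutatorElement_eq_self hφZ hz
  have hφz' : φ ⁅x, y⁆ = ⁅x, y⁆⁻¹ :=
    map_eq_inv_of_card_eq_prime hZ (pow_mem_center_of_card_quotient_center_eq_prime_sq hQ hnc a)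
      hap hφap hz
  exact hxy <| commutatorElement_eq_one_iff_mul_comm.1 <|
    eq_one_of_inv_eq_self_of_pow_odd_eq_one (hφz'.symm.trans hφz) hodd (hZp hz)

end PrimeCube

end

theorem no_inverting_involution_on_modular_group_general (p : ℕ) (hp : p.Prime) (hodd : Odd p)
    (Γ : Type*) [Group Γ]
    (hcard : Nat.card Γ = p ^ 3)
    (hexp : Monoid.exponent Γ = p ^ 2)
    (hnab : ¬ ∀ a b : Γ, a * b = b * a) :
    ¬ ∃ φ : Γ ≃* Γ, φ.trans φ = MulEquiv.refl Γ ∧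
      ∀ x : Abelianization Γ, Abelianization.map φ.toMonoidHom x = x⁻¹ := by
  rintro ⟨φ, -, hφ⟩
  have : Fact p.Prime := ⟨hp⟩
  exact not_forall_map_abelianization_eq_inv_of_card_eq_prime_cube hodd hcard hexp
    (mt isMulCommutative_iff.1 hnab) φ.toMonoidHom hφ

/-- Let `p` be an odd prime and `Γ` the nonabelian group of order `p³` and exponent `p²`
(characterized up to isomorphism by these properties).  Then no automorphism of `Γ` of order
dividing 2 induces inversion `x ↦ x⁻¹` on the abelianization `Γ/Γ' ≅ (ℤ/p)²`. -/
theorem no_inverting_involution_on_modular_group (p : ℕ) (hp : p.Prime) (hodd : Odd p)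
    (Γ : Type*) [Group Γ] [Finite Γ]
    (hcard : Nat.card Γ = p ^ 3)
    (hexp : Monoid.exponent Γ = p ^ 2)
    (hnab : ¬ ∀ a b : Γ, a * b = b * a) :
    ¬ ∃ φ : Γ ≃* Γ, φ.trans φ = MulEquiv.refl Γ ∧
      ∀ x : Abelianization Γ, Abelianization.map φ.toMonoidHom x = x⁻¹ :=
  no_inverting_involution_on_modular_group_general p hp hodd Γ hcard hexp hnab
end
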